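/- Let 1 < ρ < 2, μ > 0, λ > 0, and let f(y) = λ e^{−λy} (λy)^{μ−1} / Γ(μ) be the density of the Gamma distribution with shape μ and rate λ. Then for every t > 0, the function t ↦ ∫_0^∞ E_ρ(−y t^ρ) f(y) dy (which equals G_ρ(−t^ρ/λ)) is differentiable at t, and its derivative equals the integral of the pointwise derivative: d/dt G_ρ(−t^ρ/λ) = − ∫_0^∞ y t^{ρ−1} E_{ρ,ρ}(−y t^ρ) f(y) dy. -/

import Mathlib

open MeasureTheory

/-- The Mittag-Leffler function `E_ρ(x) = ∑ x^k / Γ(ρ k + 1)`. -/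
noncomputable def mittagLeffler (ρ x : ℝ) : ℝ :=
  ∑' k : ℕ, x ^ k / Real.Gamma (ρ * k + 1)

/-- The two-parametric Mittag-Leffler function `E_{ρ,ρ}(x) = ∑ x^k / Γ(ρ(k+1))`. -/
noncomputable def mittagLeffler2 (ρ x : ℝ) : ℝ :=
  ∑' k : ℕ, x ^ k / Real.Gamma (ρ * (k + 1))

/-- The density of the Gamma distribution with shape `μ` and rate `λ`. -/
noncomputable def gammaDens (μ lam y : ℝ) : ℝ :=
  lam * Real.exp (-(lam * y)) * (lam * y) ^ (μ - 1) / Real.Gamma μ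

open Real Set Filter Topology

section Aux

lemma gamma_convex_bound {x d : ℝ} (hx : 0 < x) (hd0 : 0 ≤ d) (hd1 : d ≤ 1) :
    Real.Gamma (x + 1) ≤ Real.Gamma (x + d) * (x + d) ^ (1 - d) := by
  have hxd : (0:ℝ) < x + d := by linarith
  have hxd1 : (0:ℝ) < x + d + 1 := by linarith
  have hconv := Real.convexOn_log_Gamma.2 (mem_Ioi.2 hxd) (mem_Ioi.2 hxd1) hd0
    (by linarith : (0:ℝ) ≤ 1 - d) (by ring)
  have hcomb : d • (x + d) + (1 - d) • (x + d + 1) = x + 1 := by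
    simp [smul_eq_mul]; ring
  rw [hcomb] at hconv
  simp only [Function.comp_apply, smul_eq_mul] at hconv
  have hG1 : Real.Gamma (x + d + 1) = (x + d) * Real.Gamma (x + d) :=
    Real.Gamma_add_one hxd.ne'
  have hGpos : 0 < Real.Gamma (x + d) := Real.Gamma_pos_of_pos hxd
  have hGpos1 : 0 < Real.Gamma (x + 1) := Real.Gamma_pos_of_pos (by linarith)
  have hlog : Real.log (Real.Gamma (x + d + 1)) =
      Real.log (x + d) + Real.log (Real.Gamma (x + d)) := by
    rw [hG1, Real.log_mul hxd.ne' hGpos.ne']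
  rw [hlog] at hconv
  have key : Real.log (Real.Gamma (x + 1)) ≤
      Real.log (Real.Gamma (x + d)) + (1 - d) * Real.log (x + d) := by nlinarith
  calc Real.Gamma (x + 1) = Real.exp (Real.log (Real.Gamma (x + 1))) := (Real.exp_log hGpos1).symm
    _ ≤ Real.exp (Real.log (Real.Gamma (x + d)) + (1 - d) * Real.log (x + d)) :=
        Real.exp_le_exp.2 key
    _ = Real.Gamma (x + d) * (x + d) ^ (1 - d) := by
        rw [Real.exp_add, Real.exp_log hGpos, Real.rpow_def_of_pos hxd]; ring_nf

lemma master_summable {ρ μ : ℝ} (hρ₁ : 1 < ρ) (hρ₂ : ρ < 2) (hμ : 0 < μ)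
    {c : ℝ} (hc : 0 ≤ c) :
    Summable (fun k : ℕ => Real.Gamma (μ + k) * (k + 1) * c ^ k / Real.Gamma (ρ * k + 1)) := by
  set a : ℕ → ℝ := fun k => Real.Gamma (μ + k) * (k + 1) * c ^ k / Real.Gamma (ρ * k + 1) with ha
  have hρ0 : (0:ℝ) < ρ := by linarith
  have hxk : ∀ k : ℕ, (0:ℝ) ≤ ρ * k := fun k => by positivity
  have htend : Tendsto (fun k : ℕ => (ρ * k + 2) ^ (ρ - 1)) atTop atTop := by
    apply (tendsto_rpow_atTop (by linarith : (0:ℝ) < ρ - 1)).comp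
    apply tendsto_atTop_add_const_right
    exact Tendsto.const_mul_atTop hρ0 tendsto_natCast_atTop_atTop
  have hev : ∀ᶠ k : ℕ in atTop, 8 * c * (μ + 1) ≤ (ρ * k + 2) ^ (ρ - 1) :=
    htend.eventually_ge_atTop _
  apply summable_of_ratio_norm_eventually_le (r := 1/2) (by norm_num)
  filter_upwards [hev] with k hk
  have hx := hxk k
  set x := ρ * (k:ℝ) with hxdef
  have hx1 : (0:ℝ) < x + 1 := by linarith
  have hx2 : (0:ℝ) < x + 2 := by linarith
  have hG1 : (0:ℝ) < Real.Gamma (x + 1) := Real.Gamma_pos_of_pos hx1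
  have hxρ : (0:ℝ) < x + ρ + 1 := by linarith
  have hG3 : (0:ℝ) < Real.Gamma (x + ρ + 1) := Real.Gamma_pos_of_pos hxρ
  have hGμ : (0:ℝ) < Real.Gamma (μ + k) := Real.Gamma_pos_of_pos (by positivity)
  have hPpos : (0:ℝ) < (x + ρ + 1) ^ (2 - ρ) := Real.rpow_pos_of_pos hxρ _
  have h1 : (x + 1) * (x + 2) * Real.Gamma (x + 1) ≤
      Real.Gamma (x + ρ + 1) * (x + ρ + 1) ^ (2 - ρ) := by
    have := gamma_convex_bound (x := x + 2) (d := ρ - 1) (by linarith) (by linarith) (by linarith)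
    have e1 : x + 2 + (ρ - 1) = x + ρ + 1 := by ring
    have e2 : 1 - (ρ - 1) = 2 - ρ := by ring
    rw [e1, e2] at this
    have e3 : Real.Gamma (x + 2 + 1) = (x + 2) * ((x + 1) * Real.Gamma (x + 1)) := by
      have b1 : Real.Gamma (x + 1 + 1) = (x + 1) * Real.Gamma (x + 1) :=
        Real.Gamma_add_one hx1.ne'
      have b2 : Real.Gamma (x + 2 + 1) = (x + 2) * Real.Gamma (x + 2) :=
        Real.Gamma_add_one hx2.ne'
      rw [b2, show x + 2 = x + 1 + 1 by ring, b1]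
    rw [e3] at this
    nlinarith
  have h2 : (μ + k) * (k + 2) * c * (x + ρ + 1) ^ (2 - ρ) ≤
      (1/2) * (k + 1) * ((x + 1) * (x + 2)) := by
    have b1 : (μ + (k:ℝ)) ≤ (μ + 1) * (k + 1) := by nlinarith [Nat.cast_nonneg (α := ℝ) k]
    have b2 : ((k:ℝ) + 2) ≤ 2 * (x + 1) := by
      have : (k:ℝ) ≤ x := by
        rw [hxdef]; nlinarith [Nat.cast_nonneg (α := ℝ) k]
      linarith
    have b3 : (x + ρ + 1) ^ (2 - ρ) ≤ 2 * (x + 2) ^ (2 - ρ) := by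
      have hle : x + ρ + 1 ≤ 2 * (x + 2) := by linarith
      calc (x + ρ + 1) ^ (2 - ρ) ≤ (2 * (x + 2)) ^ (2 - ρ) :=
            Real.rpow_le_rpow hxρ.le hle (by linarith)
        _ = 2 ^ (2 - ρ) * (x + 2) ^ (2 - ρ) := Real.mul_rpow (by norm_num) hx2.le
        _ ≤ 2 * (x + 2) ^ (2 - ρ) := by
            have : (2:ℝ) ^ (2 - ρ) ≤ 2 ^ (1:ℝ) :=
              Real.rpow_le_rpow_of_exponent_le (by norm_num) (by linarith)
            rw [Real.rpow_one] at this
            nlinarith [Real.rpow_pos_of_pos hx2 (2 - ρ)]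
    have key : 4 * c * (μ + 1) * (x + 2) ^ (2 - ρ) ≤ (1/2) * (x + 2) := by
      have hQ : (0:ℝ) < (x + 2) ^ (2 - ρ) := Real.rpow_pos_of_pos hx2 _
      have hk' : 8 * c * (μ + 1) ≤ (x + 2) ^ (ρ - 1) := hk
      calc 4 * c * (μ + 1) * (x + 2) ^ (2 - ρ)
          ≤ (1/2) * ((x + 2) ^ (ρ - 1)) * (x + 2) ^ (2 - ρ) := by nlinarith
        _ = (1/2) * (x + 2) := by rw [mul_assoc, ← Real.rpow_add hx2]; norm_num
    have hQ : (0:ℝ) < (x + 2) ^ (2 - ρ) := Real.rpow_pos_of_pos hx2 _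
    have hknn : (0:ℝ) ≤ (k:ℝ) + 1 := by positivity
    calc (μ + (k:ℝ)) * (k + 2) * c * (x + ρ + 1) ^ (2 - ρ)
        ≤ ((μ + 1) * (k + 1)) * (2 * (x + 1)) * c * (2 * (x + 2) ^ (2 - ρ)) := by
          have h0 : (0:ℝ) ≤ μ + k := by positivity
          have h0' : (0:ℝ) ≤ (k:ℝ) + 2 := by positivity
          have step1 : (μ + (k:ℝ)) * (k + 2) ≤ ((μ + 1) * (k + 1)) * (2 * (x + 1)) :=
            mul_le_mul b1 b2 h0' (by positivity)
          have step2 : (μ + (k:ℝ)) * (k + 2) * c ≤ ((μ + 1) * (k + 1)) * (2 * (x + 1)) * c :=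
            mul_le_mul_of_nonneg_right step1 hc
          exact mul_le_mul step2 b3 hPpos.le (by positivity)
      _ = (4 * c * (μ + 1) * (x + 2) ^ (2 - ρ)) * ((k + 1) * (x + 1)) := by ring
      _ ≤ ((1/2) * (x + 2)) * ((k + 1) * (x + 1)) := by
          apply mul_le_mul_of_nonneg_right key (by positivity)
      _ = (1/2) * (k + 1) * ((x + 1) * (x + 2)) := by ring
  have hapos : ∀ j : ℕ, 0 ≤ a j := by
    intro j
    have : (0:ℝ) < Real.Gamma (μ + j) := Real.Gamma_pos_of_pos (by positivity)
    have : (0:ℝ) < Real.Gamma (ρ * j + 1) := Real.Gamma_pos_of_pos (by positivity)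
    positivity
  rw [Real.norm_eq_abs, Real.norm_eq_abs, abs_of_nonneg (hapos _), abs_of_nonneg (hapos _)]
  have eA : a (k+1) = ((μ + k) * Real.Gamma (μ + k)) * ((k:ℝ) + 2) * c ^ (k+1) /
      Real.Gamma (x + ρ + 1) := by
    show Real.Gamma (μ + ((k+1 : ℕ):ℝ)) * (((k+1:ℕ):ℝ) + 1) * c ^ (k+1) /
        Real.Gamma (ρ * ((k+1:ℕ):ℝ) + 1) = _
    push_cast
    rw [show μ + ((k:ℝ) + 1) = (μ + (k:ℝ)) + 1 by ring,
      Real.Gamma_add_one (by positivity : μ + (k:ℝ) ≠ 0),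
      show ρ * ((k:ℝ) + 1) + 1 = x + ρ + 1 by rw [hxdef]; ring]
    ring
  have eB : a k = Real.Gamma (μ + k) * ((k:ℝ) + 1) * c ^ k / Real.Gamma (x + 1) := rfl
  rw [eA, eB, mul_div_assoc', div_le_div_iff₀ hG3 hG1]
  refine le_of_mul_le_mul_right ?_ hPpos
  calc (μ + ↑k) * Real.Gamma (μ + ↑k) * (↑k + 2) * c ^ (k + 1) * Real.Gamma (x + 1) *
        (x + ρ + 1) ^ (2 - ρ)
      = ((μ + ↑k) * (↑k + 2) * c * (x + ρ + 1) ^ (2 - ρ)) *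
        (Real.Gamma (μ + ↑k) * c ^ k * Real.Gamma (x + 1)) := by ring
    _ ≤ ((1/2) * (↑k + 1) * ((x + 1) * (x + 2))) *
        (Real.Gamma (μ + ↑k) * c ^ k * Real.Gamma (x + 1)) :=
        mul_le_mul_of_nonneg_right h2 (by positivity)
    _ = ((1/2) * (↑k + 1) * (Real.Gamma (μ + ↑k) * c ^ k)) *
        ((x + 1) * (x + 2) * Real.Gamma (x + 1)) := by ring
    _ ≤ ((1/2) * (↑k + 1) * (Real.Gamma (μ + ↑k) * c ^ k)) *
        (Real.Gamma (x + ρ + 1) * (x + ρ + 1) ^ (2 - ρ)) :=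
        mul_le_mul_of_nonneg_left h1 (by positivity)
    _ = 1 / 2 * (Real.Gamma (μ + ↑k) * (↑k + 1) * c ^ k) * Real.Gamma (x + ρ + 1) *
        (x + ρ + 1) ^ (2 - ρ) := by ring

/-- summability of the weighted coefficient sequence -/
lemma summable_C {ρ μ lam : ℝ} (hρ₁ : 1 < ρ) (hρ₂ : ρ < 2) (hμ : 0 < μ) (hlam : 0 < lam)
    {c : ℝ} (hc : 0 ≤ c) :
    Summable (fun k : ℕ => Real.Gamma (μ + k) * (k + 1) * c ^ k /
      (Real.Gamma μ * lam ^ k * Real.Gamma (ρ * k + 1))) := by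
  have h := (master_summable hρ₁ hρ₂ hμ (c := c / lam)
    (div_nonneg hc hlam.le)).mul_left (1 / Real.Gamma μ)
  refine h.congr fun k => ?_
  rw [div_pow]
  have h1 : Real.Gamma μ ≠ 0 := (Real.Gamma_pos_of_pos hμ).ne'
  have h2 : (lam:ℝ) ^ k ≠ 0 := by positivity
  ring

lemma gammaDens_measurable (μ lam : ℝ) : Measurable (gammaDens μ lam) := by
  unfold gammaDens
  fun_prop

lemma gammaDens_nonneg {μ lam : ℝ} (hμ : 0 < μ) (hlam : 0 < lam) {y : ℝ} (hy : 0 < y) :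
    0 ≤ gammaDens μ lam y := by
  unfold gammaDens
  have h1 : 0 < lam * y := by positivity
  have h2 := Real.rpow_nonneg h1.le (μ - 1)
  have h3 := Real.Gamma_pos_of_pos hμ
  positivity

lemma gammaDens_eq {μ lam : ℝ} (hμ : 0 < μ) (hlam : 0 < lam) {y : ℝ} (hy : 0 < y) (k : ℕ) :
    y ^ k * gammaDens μ lam y =
      (lam ^ μ / Real.Gamma μ) * (y ^ (μ + k - 1) * Real.exp (-(lam * y))) := by
  unfold gammaDens
  rw [Real.mul_rpow hlam.le hy.le]
  rw [show (y:ℝ) ^ k = y ^ ((k:ℝ)) by rw [Real.rpow_natCast]]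
  rw [show y ^ (μ + (k:ℝ) - 1) = y ^ ((k:ℝ)) * y ^ (μ - 1) by
    rw [← Real.rpow_add hy]; ring_nf]
  rw [show lam ^ μ = lam * lam ^ (μ - 1) by
    nth_rewrite 2 [show lam = lam ^ (1:ℝ) by rw [Real.rpow_one]]
    rw [← Real.rpow_add hlam]; ring_nf]
  ring

lemma gamma_moment_int {μ lam : ℝ} (hμ : 0 < μ) (hlam : 0 < lam) (k : ℕ) :
    IntegrableOn (fun y => y ^ k * gammaDens μ lam y) (Ioi 0) := by
  have hbase : IntegrableOn (fun y : ℝ => y ^ (μ + k - 1) * Real.exp (-(lam * y))) (Ioi 0) := by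
    have := integrableOn_rpow_mul_exp_neg_mul_rpow
      (s := μ + k - 1) (p := 1) (b := lam)
      (by have : (0:ℝ) ≤ (k:ℝ) := Nat.cast_nonneg k; linarith) zero_lt_one hlam
    apply this.congr_fun ?_ measurableSet_Ioi
    intro y hy
    simp only [Real.rpow_one]
    ring_nf
  have h2 : IntegrableOn
      (fun y : ℝ => (lam ^ μ / Real.Gamma μ) * (y ^ (μ + k - 1) * Real.exp (-(lam * y))))
      (Ioi 0) := hbase.const_mul (lam ^ μ / Real.Gamma μ)
  apply h2.congr_fun ?_ measurableSet_Ioi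
  intro y hy
  exact (gammaDens_eq hμ hlam hy k).symm

lemma gamma_moment_eq {μ lam : ℝ} (hμ : 0 < μ) (hlam : 0 < lam) (k : ℕ) :
    ∫ y in Ioi 0, y ^ k * gammaDens μ lam y =
      Real.Gamma (μ + k) / (Real.Gamma μ * lam ^ k) := by
  rw [setIntegral_congr_fun measurableSet_Ioi (fun y hy => gammaDens_eq hμ hlam hy k)]
  rw [MeasureTheory.integral_const_mul]
  rw [show μ + (k:ℝ) - 1 = (μ + k) - 1 by ring]
  rw [Real.integral_rpow_mul_exp_neg_mul_Ioi (by positivity) hlam]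
  have h1 : ((1:ℝ)/lam) ^ (μ + (k:ℝ)) = (lam ^ μ)⁻¹ * ((lam:ℝ) ^ k)⁻¹ := by
    rw [one_div, Real.inv_rpow hlam.le, Real.rpow_add hlam, mul_inv, Real.rpow_natCast]
  rw [h1]
  have h2 : (lam:ℝ) ^ μ ≠ 0 := by positivity
  have h3 : ((lam:ℝ) ^ k) ≠ 0 := by positivity
  have h4 : Real.Gamma μ ≠ 0 := (Real.Gamma_pos_of_pos hμ).ne'
  field_simp

lemma swap_main {ρ μ lam : ℝ} (hμ : 0 < μ) (hlam : 0 < lam)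
    {c : ℝ} (hc : 0 ≤ c) (e : ℕ → ℕ) (G : ℕ → ℝ) (hG : ∀ k, 0 < G k)
    (hsum : Summable fun k : ℕ => c ^ k / G k *
      (Real.Gamma (μ + e k) / (Real.Gamma μ * lam ^ e k)))
    (sgn : ℕ → ℝ) (hsgn : ∀ k, |sgn k| = 1) :
    (∫ y in Ioi 0, (∑' k : ℕ, sgn k * (y ^ e k * c ^ k) / G k) * gammaDens μ lam y) =
      ∑' k : ℕ, sgn k * c ^ k / G k *
        (Real.Gamma (μ + e k) / (Real.Gamma μ * lam ^ e k)) := by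
  classical
  set f : ℕ → ℝ → ℝ := fun k y => sgn k * (y ^ e k * c ^ k) / G k * gammaDens μ lam y with hf
  have hmeas : ∀ k, AEStronglyMeasurable (f k) (volume.restrict (Ioi 0)) := by
    intro k
    apply Measurable.aestronglyMeasurable
    exact ((((measurable_id.pow_const (e k)).mul_const (c ^ k)).const_mul
      (sgn k)).div_const (G k)).mul (gammaDens_measurable μ lam)
  have habs : ∀ k : ℕ, ∀ y ∈ Ioi (0:ℝ), |f k y| = c ^ k / G k * (y ^ e k * gammaDens μ lam y) := by
    intro k y hy
    have hy0 : (0:ℝ) < y := hy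
    rw [abs_mul, abs_of_nonneg (gammaDens_nonneg hμ hlam hy0), abs_div,
      abs_of_pos (hG k), abs_mul, hsgn, one_mul, abs_mul,
      abs_of_nonneg (pow_nonneg hy0.le _), abs_of_nonneg (pow_nonneg hc _)]
    ring
  have hlint : ∀ k : ℕ, ∫⁻ y in Ioi 0, ‖f k y‖₊ =
      ENNReal.ofReal (c ^ k / G k * (Real.Gamma (μ + e k) / (Real.Gamma μ * lam ^ e k))) := by
    intro k
    have e1 : ∫⁻ y in Ioi 0, ‖f k y‖₊ =
        ∫⁻ y in Ioi 0, ENNReal.ofReal (c ^ k / G k * (y ^ e k * gammaDens μ lam y)) := by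
      refine setLIntegral_congr_fun measurableSet_Ioi (fun y hy => ?_)
      rw [← enorm_eq_nnnorm, ← ofReal_norm, Real.norm_eq_abs, habs k y hy]
    rw [e1, ← ofReal_integral_eq_lintegral_ofReal]
    · rw [MeasureTheory.integral_const_mul, gamma_moment_eq hμ hlam]
    · exact (gamma_moment_int hμ hlam (e k)).const_mul _
    · refine (ae_restrict_iff' measurableSet_Ioi).2 (ae_of_all _ fun y hy => ?_)
      have hy0 : (0:ℝ) < y := hy
      exact mul_nonneg (div_nonneg (pow_nonneg hc _) (hG k).le)
        (mul_nonneg (pow_nonneg hy0.le _) (gammaDens_nonneg hμ hlam hy0))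
  have hne : (∑' k : ℕ, ∫⁻ y in Ioi 0, ‖f k y‖₊) ≠ ⊤ := by
    simp_rw [hlint]
    rw [← ENNReal.ofReal_tsum_of_nonneg (fun k => mul_nonneg
      (div_nonneg (pow_nonneg hc _) (hG k).le)
      (div_nonneg (Real.Gamma_nonneg_of_nonneg (by positivity))
        (le_of_lt (mul_pos (Real.Gamma_pos_of_pos hμ) (pow_pos hlam _))))) hsum]
    exact ENNReal.ofReal_ne_top
  have key := MeasureTheory.integral_tsum hmeas hne
  have e2 : ∀ y ∈ Ioi (0:ℝ), (∑' k : ℕ, sgn k * (y ^ e k * c ^ k) / G k) * gammaDens μ lam y =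
      ∑' k : ℕ, f k y := by
    intro y _
    rw [← tsum_mul_right]
  rw [setIntegral_congr_fun measurableSet_Ioi e2, key]
  refine tsum_congr fun k => ?_
  have : ∫ y in Ioi 0, f k y =
      (sgn k * c ^ k / G k) * ∫ y in Ioi 0, y ^ e k * gammaDens μ lam y := by
    rw [← MeasureTheory.integral_const_mul]
    refine setIntegral_congr_fun measurableSet_Ioi fun y _ => ?_
    simp only [hf]; ring
  rw [this, gamma_moment_eq hμ hlam]

lemma aux_cancel (X P T Q Gm Gμ L r n : ℝ) (hQ : Q ≠ 0) (hGμ : Gμ ≠ 0) (hL : L ≠ 0)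
    (hrn : r * n ≠ 0) (hT : T ≠ 0) :
    X / (Q / (P / T)) * (Gm / (Gμ * L)) =
      r / T * (Gm / (Gμ * L * (r * n * Q)) * (n * (X * P))) := by
  have hr : r ≠ 0 := fun h => hrn (by rw [h, zero_mul])
  have hn : n ≠ 0 := fun h => hrn (by rw [h, mul_zero])
  field_simp

lemma aux_cancel2 (S X Q s Gm Gμ L r n : ℝ) (hQ : Q ≠ 0) (hs : s ≠ 0) (hGμ : Gμ ≠ 0)
    (hL : L ≠ 0) (hrn : r * n ≠ 0) :
    S * (-1) * (Gm / (Gμ * L * (r * n * Q))) * (r * n * (s * X)) =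
      -(S * X / (Q / s) * (Gm / (Gμ * L))) := by
  have hr : r ≠ 0 := fun h => hrn (by rw [h, zero_mul])
  have hn : n ≠ 0 := fun h => hrn (by rw [h, mul_zero])
  field_simp

end Aux

/-- Differentiation under the integral sign: for `α ∼ Gamma(μ, λ)`, the function
`t ↦ E[E_ρ(−α t^ρ)] = G_ρ(−t^ρ/λ)` is differentiable at every `t > 0`, with derivative
`−∫_0^∞ y t^{ρ−1} E_{ρ,ρ}(−y t^ρ) f(y) dy`. -/
theorem genML_deriv_under_integral (ρ μ lam : ℝ)
    (hρ₁ : 1 < ρ) (hρ₂ : ρ < 2) (hμ : 0 < μ) (hlam : 0 < lam) :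
    ∀ t : ℝ, 0 < t →
      HasDerivAt
        (fun τ : ℝ => ∫ y in Set.Ioi (0 : ℝ), mittagLeffler ρ (-(y * τ ^ ρ)) * gammaDens μ lam y)
        (-∫ y in Set.Ioi (0 : ℝ),
            y * t ^ (ρ - 1) * mittagLeffler2 ρ (-(y * t ^ ρ)) * gammaDens μ lam y)
        t := by
  intro t ht
  have hΓμ : 0 < Real.Gamma μ := Real.Gamma_pos_of_pos hμ
  have hρ0 : (0:ℝ) < ρ := by linarith
  set B : ℝ := 2 * t with hB
  have hBpos : 0 < B := by rw [hB]; linarith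
  set s : Set ℝ := Ioo (t/2) B with hs
  have hts : t ∈ s := ⟨by linarith, by rw [hB]; linarith⟩
  have hpos : ∀ τ ∈ s, (0:ℝ) < τ := fun τ hτ => lt_trans (by linarith) hτ.1
  have hμk : ∀ k : ℕ, (0:ℝ) < μ + k := fun k => by
    have := Nat.cast_nonneg (α := ℝ) k; linarith
  have hρk : ∀ k : ℕ, (0:ℝ) < ρ * k + 1 := fun k => by
    have := Nat.cast_nonneg (α := ℝ) k; nlinarith
  have hGm : ∀ k : ℕ, 0 < Real.Gamma (μ + k) := fun k => Real.Gamma_pos_of_pos (hμk k)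
  have hGρ : ∀ k : ℕ, 0 < Real.Gamma (ρ * k + 1) := fun k => Real.Gamma_pos_of_pos (hρk k)
  set C : ℕ → ℝ :=
    fun k => Real.Gamma (μ + k) / (Real.Gamma μ * lam ^ k * Real.Gamma (ρ * k + 1)) with hC
  have hCpos : ∀ k : ℕ, 0 < C k := fun k => by
    rw [hC]
    exact div_pos (hGm k) (mul_pos (mul_pos hΓμ (pow_pos hlam k)) (hGρ k))
  set g : ℕ → ℝ → ℝ := fun k τ => (-1:ℝ) ^ k * C k * τ ^ (ρ * (k:ℝ)) with hg
  set g' : ℕ → ℝ → ℝ :=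
    fun k τ => (-1:ℝ) ^ k * C k * (ρ * (k:ℝ) * τ ^ (ρ * (k:ℝ) - 1)) with hg'
  set u : ℕ → ℝ := fun k => C k * (ρ * (k:ℝ) * B ^ (ρ * (k:ℝ))) / B with hu
  have hrw : ∀ τ : ℝ, 0 < τ → ∀ k : ℕ, τ ^ (ρ * (k:ℝ)) = (τ ^ ρ) ^ k := fun τ hτ k => by
    rw [Real.rpow_mul hτ.le, Real.rpow_natCast]
  have hS : ∀ {c : ℝ}, 0 ≤ c → Summable (fun k : ℕ => C k * ((k + 1) * c ^ k)) := by
    intro c hc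
    refine (summable_C hρ₁ hρ₂ hμ hlam hc).congr fun k => ?_
    rw [hC]; ring
  -- summability of the uniform bound
  have husum : Summable u := by
    refine Summable.of_nonneg_of_le (fun k => ?_) (fun k => ?_)
      ((hS (Real.rpow_nonneg hBpos.le ρ)).mul_left (ρ / B))
    · rw [hu]
      exact div_nonneg (mul_nonneg (hCpos k).le (mul_nonneg (by positivity)
        (Real.rpow_nonneg hBpos.le _))) hBpos.le
    · simp only [hu]
      rw [hrw B hBpos k]
      have e1 : C k * (ρ * (k:ℝ) * (B ^ ρ) ^ k) / B = (ρ / B) * (C k * ((k:ℝ) * (B ^ ρ) ^ k)) := by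
        ring
      rw [e1]
      refine mul_le_mul_of_nonneg_left ?_ (by positivity)
      refine mul_le_mul_of_nonneg_left ?_ (hCpos k).le
      refine mul_le_mul_of_nonneg_right (by linarith) (pow_nonneg (Real.rpow_nonneg hBpos.le ρ) k)
  -- termwise derivatives
  have hderiv : ∀ k : ℕ, ∀ τ : ℝ, τ ∈ s → HasDerivAt (g k) (g' k τ) τ := by
    intro k τ hτ
    have hτ0 := hpos τ hτ
    exact (Real.hasDerivAt_rpow_const (x := τ) (p := ρ * (k:ℝ))
      (Or.inl hτ0.ne')).const_mul ((-1:ℝ) ^ k * C k)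
  -- uniform bound on derivatives
  have hbound : ∀ k : ℕ, ∀ τ : ℝ, τ ∈ s → ‖g' k τ‖ ≤ u k := by
    intro k τ hτ
    have hτ0 := hpos τ hτ
    have habs : ‖g' k τ‖ = C k * (ρ * (k:ℝ) * τ ^ (ρ * (k:ℝ) - 1)) := by
      rw [hg']
      rw [Real.norm_eq_abs, abs_mul, abs_mul, abs_pow, abs_neg, abs_one, one_pow, one_mul,
        abs_of_pos (hCpos k), abs_of_nonneg (mul_nonneg (by positivity)
          (Real.rpow_nonneg hτ0.le _))]
    rw [habs, hu]
    cases k with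
    | zero => simp
    | succ n =>
      have hcast : (((n+1 : ℕ)):ℝ) = (n:ℝ) + 1 := by push_cast; ring
      have hek : (0:ℝ) ≤ ρ * ((n+1:ℕ):ℝ) - 1 := by
        rw [hcast]; nlinarith [Nat.cast_nonneg (α := ℝ) n]
      have h1 : τ ^ (ρ * ((n+1:ℕ):ℝ) - 1) ≤ B ^ (ρ * ((n+1:ℕ):ℝ) - 1) :=
        Real.rpow_le_rpow hτ0.le (le_of_lt hτ.2) hek
      have h2 : B ^ (ρ * ((n+1:ℕ):ℝ) - 1) = B ^ (ρ * ((n+1:ℕ):ℝ)) / B := by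
        rw [Real.rpow_sub hBpos, Real.rpow_one]
      calc C (n+1) * (ρ * ((n+1:ℕ):ℝ) * τ ^ (ρ * ((n+1:ℕ):ℝ) - 1))
          ≤ C (n+1) * (ρ * ((n+1:ℕ):ℝ) * (B ^ (ρ * ((n+1:ℕ):ℝ)) / B)) := by
            refine mul_le_mul_of_nonneg_left ?_ (hCpos _).le
            refine mul_le_mul_of_nonneg_left (h1.trans_eq h2) (by positivity)
        _ = C (n+1) * (ρ * ((n+1:ℕ):ℝ) * B ^ (ρ * ((n+1:ℕ):ℝ))) / B := by ring
  -- summability at the point t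
  have hg0 : Summable fun k => g k t := by
    refine Summable.of_norm ?_
    refine Summable.of_nonneg_of_le (fun k => norm_nonneg _) (fun k => ?_)
      (hS (Real.rpow_nonneg ht.le ρ))
    rw [hg]
    simp only []
    rw [Real.norm_eq_abs, abs_mul, abs_mul, abs_pow, abs_neg, abs_one, one_pow, one_mul,
      abs_of_pos (hCpos k), abs_of_nonneg (Real.rpow_nonneg (hpos t hts).le _),
      hrw t ht k]
    refine mul_le_mul_of_nonneg_left ?_ (hCpos k).le
    refine le_mul_of_one_le_left (pow_nonneg (Real.rpow_nonneg ht.le ρ) k) ?_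
    have := Nat.cast_nonneg (α := ℝ) k; linarith
  -- the sum of derivatives
  have main := hasDerivAt_tsum_of_isPreconnected husum isOpen_Ioo isPreconnected_Ioo
    hderiv hbound hts hg0 hts
  -- identify the function with the series on s
  have heq : ∀ τ ∈ s, (∫ y in Ioi 0, mittagLeffler ρ (-(y * τ ^ ρ)) * gammaDens μ lam y) =
      ∑' k, g k τ := by
    intro τ hτ
    have hτ0 := hpos τ hτ
    have hcρ : (0:ℝ) ≤ τ ^ ρ := Real.rpow_nonneg hτ0.le ρ
    have hsum1 : Summable fun k : ℕ => (τ ^ ρ) ^ k / Real.Gamma (ρ * k + 1) *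
        (Real.Gamma (μ + k) / (Real.Gamma μ * lam ^ k)) := by
      refine Summable.of_nonneg_of_le (fun k => ?_) (fun k => ?_) (hS hcρ)
      · exact mul_nonneg (div_nonneg (pow_nonneg hcρ _) (hGρ k).le)
          (div_nonneg (hGm k).le (mul_pos hΓμ (pow_pos hlam k)).le)
      · have e : (τ ^ ρ) ^ k / Real.Gamma (ρ * k + 1) *
            (Real.Gamma (μ + k) / (Real.Gamma μ * lam ^ k)) = C k * (1 * (τ ^ ρ) ^ k) := by
          rw [hC]; ring
        rw [e]
        refine mul_le_mul_of_nonneg_left ?_ (hCpos k).le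
        refine mul_le_mul_of_nonneg_right ?_ (pow_nonneg hcρ k)
        have := Nat.cast_nonneg (α := ℝ) k; linarith
    have h1 := swap_main (ρ := ρ) hμ hlam hcρ (fun k => k)
      (fun k => Real.Gamma (ρ * k + 1)) hGρ hsum1 (fun k => (-1:ℝ) ^ k)
      (fun k => by rw [abs_pow, abs_neg, abs_one, one_pow])
    have e4 : (fun y => mittagLeffler ρ (-(y * τ ^ ρ)) * gammaDens μ lam y) =
        (fun y => (∑' k : ℕ, (-1:ℝ) ^ k * (y ^ k * (τ ^ ρ) ^ k) / Real.Gamma (ρ * k + 1)) *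
          gammaDens μ lam y) := by
      funext y
      congr 1
      simp only [mittagLeffler]
      exact tsum_congr fun k => by
        rw [show -(y * τ ^ ρ) = (-1) * (y * τ ^ ρ) by ring, mul_pow, mul_pow]
    rw [e4, h1]
    exact tsum_congr fun k => by
      simp only [hg, hC]
      rw [hrw τ hτ0 k]
      ring
  have hfeq : (fun τ : ℝ => ∫ y in Ioi 0, mittagLeffler ρ (-(y * τ ^ ρ)) * gammaDens μ lam y)
      =ᶠ[𝓝 t] (fun τ => ∑' k, g k τ) := by
    filter_upwards [isOpen_Ioo.mem_nhds hts] with τ hτ using heq τ hτ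
  have hfinal := main.congr_of_eventuallyEq hfeq
  -- identify the derivative with the integral
  set G2 : ℕ → ℝ := fun j => Real.Gamma (ρ * ((j:ℝ) + 1)) / t ^ (ρ - 1) with hG2def
  have hρj : ∀ j : ℕ, (0:ℝ) < ρ * ((j:ℝ) + 1) := fun j => by
    have := Nat.cast_nonneg (α := ℝ) j; nlinarith
  have hGρ2 : ∀ j : ℕ, 0 < Real.Gamma (ρ * ((j:ℝ) + 1)) := fun j =>
    Real.Gamma_pos_of_pos (hρj j)
  have hG2 : ∀ j : ℕ, 0 < G2 j := fun j => by
    rw [hG2def]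
    exact div_pos (hGρ2 j) (Real.rpow_pos_of_pos ht _)
  have htρ1 : t ^ (ρ - 1) = t ^ ρ / t := by rw [Real.rpow_sub ht, Real.rpow_one]
  have hsum2 : Summable fun j : ℕ => (t ^ ρ) ^ j / G2 j *
      (Real.Gamma (μ + ((j+1:ℕ):ℝ)) / (Real.Gamma μ * lam ^ (j+1))) := by
    have hshift : Summable (fun j : ℕ => C (j+1) * ((((j+1:ℕ):ℝ) + 1) * (t ^ ρ) ^ (j+1))) :=
      (summable_nat_add_iff 1).2 (hS (Real.rpow_nonneg ht.le ρ))
    refine Summable.of_nonneg_of_le (fun j => ?_) (fun j => ?_) (hshift.mul_left (ρ / t))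
    · exact mul_nonneg (div_nonneg (pow_nonneg (Real.rpow_nonneg ht.le ρ) _) (hG2 j).le)
        (div_nonneg (Real.Gamma_pos_of_pos (hμk (j+1))).le
          (mul_pos hΓμ (pow_pos hlam (j+1))).le)
    · have hne1 : ρ * ((j:ℝ) + 1) ≠ 0 := (hρj j).ne'
      have ekey : (t ^ ρ) ^ j / G2 j *
          (Real.Gamma (μ + ((j+1:ℕ):ℝ)) / (Real.Gamma μ * lam ^ (j+1))) =
          (ρ / t) * (C (j+1) * ((((j:ℝ)) + 1) * (t ^ ρ) ^ (j+1))) := by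
        rw [hG2def, hC]
        push_cast
        rw [Real.Gamma_add_one hne1, htρ1, pow_succ]
        exact aux_cancel ((t ^ ρ) ^ j) (t ^ ρ) t (Real.Gamma (ρ * ((j:ℝ) + 1)))
          (Real.Gamma (μ + ((j:ℝ) + 1))) (Real.Gamma μ) (lam ^ (j+1)) ρ ((j:ℝ) + 1)
          (hGρ2 j).ne' hΓμ.ne' (by positivity) hne1 ht.ne'
      rw [ekey]
      refine mul_le_mul_of_nonneg_left ?_ (by positivity)
      refine mul_le_mul_of_nonneg_left ?_ (hCpos (j+1)).le
      refine mul_le_mul_of_nonneg_right ?_ (pow_nonneg (Real.rpow_nonneg ht.le ρ) (j+1))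
      rw [Nat.cast_add, Nat.cast_one]; linarith
  have h2 := swap_main (ρ := ρ) hμ hlam (Real.rpow_nonneg ht.le ρ) (fun j => j + 1)
    G2 hG2 hsum2 (fun j => (-1:ℝ) ^ j)
    (fun j => by rw [abs_pow, abs_neg, abs_one, one_pow])
  have e5 : (fun y : ℝ => y * t ^ (ρ - 1) * mittagLeffler2 ρ (-(y * t ^ ρ)) *
      gammaDens μ lam y) =
      (fun y : ℝ => (∑' j : ℕ, (-1:ℝ) ^ j * (y ^ (j+1) * (t ^ ρ) ^ j) / G2 j) *
        gammaDens μ lam y) := by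
    funext y
    have hpt : y * t ^ (ρ - 1) * mittagLeffler2 ρ (-(y * t ^ ρ)) =
        ∑' j : ℕ, (-1:ℝ) ^ j * (y ^ (j+1) * (t ^ ρ) ^ j) / G2 j := by
      simp only [mittagLeffler2]
      rw [← tsum_mul_left]
      exact tsum_congr fun j => by
        rw [hG2def, show -(y * t ^ ρ) = (-1) * (y * t ^ ρ) by ring, mul_pow, mul_pow,
          div_div_eq_mul_div]
        ring
    rw [hpt]
  have hI : (∫ y in Ioi 0, y * t ^ (ρ - 1) * mittagLeffler2 ρ (-(y * t ^ ρ)) *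
      gammaDens μ lam y) = ∑' j : ℕ, (-1:ℝ) ^ j * (t ^ ρ) ^ j / G2 j *
        (Real.Gamma (μ + ((j+1:ℕ):ℝ)) / (Real.Gamma μ * lam ^ (j+1))) := by
    rw [e5]
    exact h2
  have hsumg' : Summable fun k => g' k t :=
    Summable.of_norm_bounded husum (fun k => hbound k t hts)
  have hval : (∑' k, g' k t) = -(∫ y in Ioi 0, y * t ^ (ρ - 1) *
      mittagLeffler2 ρ (-(y * t ^ ρ)) * gammaDens μ lam y) := by
    rw [Summable.tsum_eq_zero_add hsumg']
    have h00 : g' 0 t = 0 := by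
      simp only [hg', Nat.cast_zero, mul_zero, zero_mul, pow_zero, one_mul]
    rw [h00, zero_add, hI, ← tsum_neg]
    refine tsum_congr fun j => ?_
    have hne1 : ρ * ((j:ℝ) + 1) ≠ 0 := (hρj j).ne'
    simp only [hg', hC, hG2def]
    push_cast
    rw [Real.Gamma_add_one hne1]
    rw [show ρ * ((j:ℝ) + 1) - 1 = (ρ - 1) + ρ * (j:ℝ) by ring, Real.rpow_add ht,
      hrw t ht j, pow_succ]
    exact aux_cancel2 ((-1:ℝ) ^ j) ((t ^ ρ) ^ j) (Real.Gamma (ρ * ((j:ℝ) + 1))) (t ^ (ρ - 1))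
      (Real.Gamma (μ + ((j:ℝ) + 1))) (Real.Gamma μ) (lam ^ (j+1)) ρ ((j:ℝ) + 1)
      (hGρ2 j).ne' (Real.rpow_pos_of_pos ht _).ne' hΓμ.ne' (by positivity) hne1
  rw [hval] at hfinal
  exact hfinal
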